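/- Let L be a split regular Hom-Leibniz algebra with symmetric root system Λ, and let U be a vector space complement of span{[L_α, L_{-α}] : α ∈ Λ} in H. Then L = U + Σ_{[α]∈Λ/~} I_{[α]}, where each I_{[α]} is an ideal of L and [I_{[α]}, I_{[β]}] = 0 whenever [α] ≠ [β]. -/
import Mathlib


open Submodule

/-- A split regular Hom-Leibniz algebra: a vector space `L` over `K` with a bilinear
product, an algebra automorphism `φ` satisfying the Hom-Leibniz identity, together with
a distinguished abelian subalgebra `H` (with `φ|_H` given as `φH`). -/
structure SplitRegularHomLeibniz (K L : Type*) [Field K] [AddCommGroup L] [Module K L] where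
  bracket : L →ₗ[K] L →ₗ[K] L
  φ : L ≃ₗ[K] L
  leibniz : ∀ x y z : L, bracket (bracket y z) (φ x)
      = bracket (bracket y x) (φ z) + bracket (φ y) (bracket z x)
  φ_bracket : ∀ x y : L, φ (bracket x y) = bracket (φ x) (φ y)
  H : Submodule K L
  H_abelian : ∀ x ∈ H, ∀ y ∈ H, bracket x y = 0
  φH : H ≃ₗ[K] H
  φH_spec : ∀ h : H, (φH h : L) = φ h

namespace SplitRegularHomLeibniz

variable {K L : Type*} [Field K] [AddCommGroup L] [Module K L]
variable (A : SplitRegularHomLeibniz K L)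

/-- The root space associated to a linear functional `α : H → K`. -/
def rootSpace (α : Module.Dual K A.H) : Submodule K L where
  carrier := {v | ∀ h : A.H, A.bracket v h = α h • A.φ v}
  add_mem' := by
    intro a b ha hb h
    simp [map_add, ha h, hb h, smul_add]
  zero_mem' := by intro h; simp
  smul_mem' := by
    intro c a ha h
    simp only [map_smul, LinearMap.smul_apply, ha h]
    rw [smul_comm]

/-- The set of nonzero roots. -/
def roots : Set (Module.Dual K A.H) := {α | α ≠ 0 ∧ A.rootSpace α ≠ ⊥}

/-- The splitting condition : `L = H ⊕ (⊕_{α ∈ Λ} L_α)`. -/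
def IsSplit : Prop :=
  (A.H ⊔ ⨆ α ∈ A.roots, A.rootSpace α) = ⊤ ∧
  iSupIndep
    (fun i : Option A.roots => Option.elim i A.H (fun α => A.rootSpace α.1))

/-- `H` is a maximal abelian subalgebra. -/
def MaximalAbelian : Prop := ∀ H' : Submodule K L,
  (∀ x ∈ H', ∀ y ∈ H', A.bracket x y = 0) → H'.map A.φ.toLinearMap = H' →
    A.H ≤ H' → H' = A.H

/-- The map `α ↦ α ∘ φ⁻¹` on linear functionals on `H`. -/
def twist (α : Module.Dual K A.H) : Module.Dual K A.H :=
  α.comp A.φH.symm.toLinearMap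

/-- The map `α ↦ α ∘ φ^{-z}` for `z : ℤ`. -/
def ztwist (z : ℤ) (α : Module.Dual K A.H) : Module.Dual K A.H :=
  α.comp ((A.φH ^ (-z)).toLinearMap)

/-- Twisted partial sums of a chain of roots:
`s 0 = f 0`, `s (i+1) = (s i)∘φ⁻¹ + (f (i+1))∘φ⁻¹`. -/
def chainSums (f : ℕ → Module.Dual K A.H) : ℕ → Module.Dual K A.H
  | 0 => f 0
  | i + 1 => A.twist (chainSums f i + f (i + 1))

/-- `α` is connected to `β`. -/
def Connected (α β : Module.Dual K A.H) : Prop :=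
  ∃ (k : ℕ) (f : ℕ → Module.Dual K A.H),
    (∀ i ≤ k, f i ∈ A.roots) ∧
    (∃ n : ℕ, f 0 = A.twist^[n] α) ∧
    (∀ i < k, A.chainSums f i ∈ A.roots) ∧
    (∃ m : ℕ, A.chainSums f k = A.twist^[m] β ∨ A.chainSums f k = -(A.twist^[m] β))

/-- Symmetric root system. -/
def SymmetricRoots : Prop := ∀ α ∈ A.roots, -α ∈ A.roots

/-- `[L_α, L_{-α}]` as a submodule (its span). -/
def bracketSpan (α : Module.Dual K A.H) : Submodule K L :=
  Submodule.span K
    (Set.image2 (fun x y => A.bracket x y) (A.rootSpace α : Set L) (A.rootSpace (-α) : Set L))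

/-- The connection class of `α`. -/
def cls (α : Module.Dual K A.H) : Set (Module.Dual K A.H) :=
  {β | β ∈ A.roots ∧ A.Connected α β}

def I0 (α : Module.Dual K A.H) : Submodule K L := ⨆ β ∈ A.cls α, A.bracketSpan β

def Vcls (α : Module.Dual K A.H) : Submodule K L := ⨆ β ∈ A.cls α, A.rootSpace β

/-- The ideal associated to the connection class of `α`. -/
def Icls (α : Module.Dual K A.H) : Submodule K L := A.I0 α ⊔ A.Vcls α

/-- Ideals of a Hom-Leibniz algebra. -/
def IsIdeal (I : Submodule K L) : Prop :=
  (∀ x ∈ I, ∀ y : L, A.bracket x y ∈ I ∧ A.bracket y x ∈ I) ∧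
    I.map A.φ.toLinearMap = I

/-- The ideal `J` generated by the squares `[x,x]`. -/
def J : Submodule K L :=
  sInf {I : Submodule K L | A.IsIdeal I ∧ ∀ x : L, A.bracket x x ∈ I}

/-- The annihilator `Z(L)`. -/
def annihilator : Set L :=
  {x | ∀ y : L, A.bracket x y = 0 ∧ A.bracket y x = 0}


/-- The candidate ideal attached to a set of roots. -/
def IOfClass (S : Set (Module.Dual K A.H)) : Submodule K L :=
  (⨆ β ∈ S, A.bracketSpan β) ⊔ (⨆ β ∈ S, A.rootSpace β)

/-- Maximal length: every root space is one-dimensional. -/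
def MaximalLength : Prop := ∀ α ∈ A.roots, Module.finrank K (A.rootSpace α) = 1

/-- `L = [L,L]`. -/
def BracketGenerates : Prop :=
  Submodule.span K {z : L | ∃ x y : L, z = A.bracket x y} = ⊤

/-- The roots `α` with `L_α ⊆ J`. -/
def rootsJ : Set (Module.Dual K A.H) := {α ∈ A.roots | A.rootSpace α ≤ A.J}

/-- The roots `α` with `L_α ∩ J = 0`. -/
def rootsNotJ : Set (Module.Dual K A.H) := {α ∈ A.roots | A.rootSpace α ⊓ A.J = ⊥}

/-- Root-multiplicativity for split regular Hom-Leibniz algebras of maximal length. -/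
def RootMultiplicative : Prop :=
  (∀ α ∈ A.rootsNotJ, ∀ β ∈ A.rootsNotJ, A.twist α + A.twist β ∈ A.roots →
    ∃ x ∈ A.rootSpace α, ∃ y ∈ A.rootSpace β, A.bracket x y ≠ 0) ∧
  (∀ α ∈ A.rootsNotJ, ∀ γ ∈ A.rootsJ, A.twist α + A.twist γ ∈ A.rootsJ →
    ∃ x ∈ A.rootSpace α, ∃ y ∈ A.rootSpace γ, A.bracket x y ≠ 0)

/-- `α` is `¬J`-connected to `β` (both in `Λ^γ`, given by the set `S`):
there is a chain whose elements beyond the first lie in `Λ^{¬J}` and whose twisted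
partial sums lie in `Λ^γ`. -/
def NotJConnected (S : Set (Module.Dual K A.H)) (α β : Module.Dual K A.H) : Prop :=
  ∃ (k : ℕ) (f : ℕ → Module.Dual K A.H),
    (∀ i, 1 ≤ i → i ≤ k → f i ∈ A.rootsNotJ) ∧
    (∃ n : ℕ, f 0 = A.twist^[n] α) ∧
    (∀ i ≤ k, A.chainSums f i ∈ S) ∧
    (∃ m : ℕ, A.chainSums f k = A.twist^[m] β ∨ A.chainSums f k = -(A.twist^[m] β))

/-- Triviality of the Lie-annihilator `Z_Lie(L)`. -/
def LieAnnZero : Prop := ∀ x : L,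
  (∀ y ∈ A.H ⊔ ⨆ α ∈ A.rootsNotJ, A.rootSpace α,
    A.bracket x y = 0 ∧ A.bracket y x = 0) → x = 0

end SplitRegularHomLeibniz


namespace SplitRegularHomLeibniz

section Aux

variable {K L : Type*} [Field K] [AddCommGroup L] [Module K L]
variable (A : SplitRegularHomLeibniz K L)

/-- Inverse of `twist`. -/
def untwist (α : Module.Dual K A.H) : Module.Dual K A.H :=
  α.comp A.φH.toLinearMap

lemma twist_untwist (α : Module.Dual K A.H) : A.twist (A.untwist α) = α := by
  ext h; simp [twist, untwist]

lemma untwist_twist (α : Module.Dual K A.H) : A.untwist (A.twist α) = α := by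
  ext h; simp [twist, untwist]

lemma twist_add (a b : Module.Dual K A.H) : A.twist (a + b) = A.twist a + A.twist b := by
  ext h; simp [twist]

lemma twist_neg (a : Module.Dual K A.H) : A.twist (-a) = -A.twist a := by
  ext h; simp [twist]

lemma twist_smul (c : K) (a : Module.Dual K A.H) : A.twist (c • a) = c • A.twist a := by
  ext h; simp [twist]

lemma twist_zero : A.twist 0 = 0 := by ext h; simp [twist]

lemma twist_eq_zero_iff (a : Module.Dual K A.H) : A.twist a = 0 ↔ a = 0 := by
  constructor
  · intro h
    have := congrArg A.untwist h
    rwa [untwist_twist, untwist, LinearMap.zero_comp] at this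
  · rintro rfl; exact A.twist_zero

lemma twist_iter_add (n : ℕ) (a b : Module.Dual K A.H) :
    A.twist^[n] (a + b) = A.twist^[n] a + A.twist^[n] b := by
  induction n with
  | zero => simp
  | succ n ih => simp [Function.iterate_succ_apply', ih, twist_add]

lemma twist_iter_neg (n : ℕ) (a : Module.Dual K A.H) :
    A.twist^[n] (-a) = -A.twist^[n] a := by
  induction n with
  | zero => simp
  | succ n ih => simp [Function.iterate_succ_apply', ih, twist_neg]

lemma twist_iter_smul (n : ℕ) (c : K) (a : Module.Dual K A.H) :
    A.twist^[n] (c • a) = c • A.twist^[n] a := by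
  induction n with
  | zero => simp
  | succ n ih => simp [Function.iterate_succ_apply', ih, twist_smul]

lemma twist_twist_iter (n : ℕ) (a : Module.Dual K A.H) :
    A.twist (A.twist^[n] a) = A.twist^[n] (A.twist a) := by
  rw [← Function.iterate_succ_apply' A.twist n a, Function.iterate_succ_apply]

lemma mem_rootSpace_iff {x : L} {α : Module.Dual K A.H} :
    x ∈ A.rootSpace α ↔ ∀ h : A.H, A.bracket x h = α h • A.φ x := Iff.rfl

lemma H_le_rootSpace_zero : A.H ≤ A.rootSpace (0 : Module.Dual K A.H) := by
  intro x hx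
  rw [mem_rootSpace_iff]
  intro h
  rw [A.H_abelian x hx h h.2]
  simp

lemma phi_coe (h : A.H) : A.φ h = ((A.φH h : A.H) : L) := (A.φH_spec h).symm

lemma bracket_mem_rootSpace {x y : L} {δ ε : Module.Dual K A.H}
    (hx : x ∈ A.rootSpace δ) (hy : y ∈ A.rootSpace ε) :
    A.bracket x y ∈ A.rootSpace (A.twist (δ + ε)) := by
  rw [mem_rootSpace_iff]
  intro h
  set h' : A.H := A.φH.symm h with hh'
  have hφh' : A.φ (h' : L) = (h : L) := by
    rw [A.phi_coe h', hh', LinearEquiv.apply_symm_apply]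
  have key := A.leibniz (h' : L) x y
  rw [hφh'] at key
  have h1 : A.bracket x (h' : L) = δ h' • A.φ x := hx h'
  have h2 : A.bracket y (h' : L) = ε h' • A.φ y := hy h'
  rw [h1, h2] at key
  rw [key]
  have : A.twist (δ + ε) h = δ h' + ε h' := by simp [twist, hh']
  rw [this, A.φ_bracket, add_smul]
  simp [smul_add, smul_comm]

lemma phi_mem_rootSpace {x : L} {δ : Module.Dual K A.H} (hx : x ∈ A.rootSpace δ) :
    A.φ x ∈ A.rootSpace (A.twist δ) := by
  rw [mem_rootSpace_iff]
  intro h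
  set h' : A.H := A.φH.symm h with hh'
  have hφh' : A.φ (h' : L) = (h : L) := by
    rw [A.phi_coe h', hh', LinearEquiv.apply_symm_apply]
  have : A.bracket (A.φ x) (h : L) = A.φ (A.bracket x (h' : L)) := by
    rw [A.φ_bracket, hφh']
  rw [this, hx h', map_smul]
  rfl

lemma phi_symm_mem_rootSpace {x : L} {δ : Module.Dual K A.H} (hx : x ∈ A.rootSpace δ) :
    A.φ.symm x ∈ A.rootSpace (A.untwist δ) := by
  rw [mem_rootSpace_iff]
  intro h
  have h2 : A.φ ((A.φH h : A.H) : L) = A.φ (A.φ ((h : A.H) : L)) := by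
    rw [← A.phi_coe, A.phi_coe h, ← A.phi_coe]
  have hc : ((A.φH h : A.H) : L) = A.φ ((h : A.H) : L) := A.φH_spec h
  have : A.φ (A.bracket (A.φ.symm x) (h : L)) = A.bracket x (((A.φH h : A.H) : L)) := by
    rw [A.φ_bracket, LinearEquiv.apply_symm_apply, hc]
  have hx' := hx (A.φH h)
  rw [hx'] at this
  have : A.bracket (A.φ.symm x) (h : L) = A.φ.symm (δ (A.φH h) • A.φ x) := by
    rw [← this, LinearEquiv.symm_apply_apply]
  rw [this, map_smul, LinearEquiv.symm_apply_apply]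
  have : A.φ (A.φ.symm x) = x := A.φ.apply_symm_apply x
  rw [this]
  rfl

lemma rootSpace_eq_bot {δ : Module.Dual K A.H} (h0 : δ ≠ 0) (hδ : δ ∉ A.roots) :
    A.rootSpace δ = ⊥ := by
  by_contra h
  exact hδ ⟨h0, h⟩

lemma twist_mem_roots {δ : Module.Dual K A.H} (hδ : δ ∈ A.roots) : A.twist δ ∈ A.roots := by
  obtain ⟨h0, hne⟩ := hδ
  refine ⟨fun h => h0 ?_, fun h => hne ?_⟩
  · have := congrArg A.untwist h
    rwa [untwist_twist, untwist, LinearMap.zero_comp] at this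
  · rw [Submodule.eq_bot_iff] at h ⊢
    intro x hx
    have := h (A.φ x) (A.phi_mem_rootSpace hx)
    simpa using this

lemma untwist_mem_roots {δ : Module.Dual K A.H} (hδ : δ ∈ A.roots) : A.untwist δ ∈ A.roots := by
  obtain ⟨h0, hne⟩ := hδ
  refine ⟨fun h => h0 ?_, fun h => hne ?_⟩
  · have := congrArg A.twist h
    rwa [twist_untwist, twist_zero] at this
  · rw [Submodule.eq_bot_iff] at h ⊢
    intro x hx
    have hx' : A.φ.symm x ∈ A.rootSpace (A.untwist δ) := A.phi_symm_mem_rootSpace hx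
    have := h (A.φ.symm x) hx'
    simpa using this

lemma twist_iter_mem_roots {δ : Module.Dual K A.H} (hδ : δ ∈ A.roots) (n : ℕ) :
    A.twist^[n] δ ∈ A.roots := by
  induction n with
  | zero => simpa
  | succ n ih => rw [Function.iterate_succ_apply']; exact A.twist_mem_roots ih

lemma chainSums_zero (f : ℕ → Module.Dual K A.H) : A.chainSums f 0 = f 0 := rfl

lemma chainSums_succ (f : ℕ → Module.Dual K A.H) (i : ℕ) :
    A.chainSums f (i + 1) = A.twist (A.chainSums f i + f (i + 1)) := rfl

lemma chainSums_congr {f g : ℕ → Module.Dual K A.H} {k : ℕ}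
    (h : ∀ i ≤ k, f i = g i) : ∀ i ≤ k, A.chainSums f i = A.chainSums g i := by
  intro i hi
  induction i with
  | zero => simpa [chainSums_zero] using h 0 (Nat.zero_le k)
  | succ i ih =>
    rw [chainSums_succ, chainSums_succ, ih (le_trans (Nat.le_succ i) hi),
      h (i+1) hi]

lemma chainSums_twist_iter (n : ℕ) (f : ℕ → Module.Dual K A.H) (i : ℕ) :
    A.chainSums (fun j => A.twist^[n] (f j)) i = A.twist^[n] (A.chainSums f i) := by
  induction i with
  | zero => simp [chainSums_zero]
  | succ i ih =>
    rw [chainSums_succ, chainSums_succ, ih, ← twist_iter_add, twist_twist_iter]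

lemma connected_self {α : Module.Dual K A.H} (hα : α ∈ A.roots) : A.Connected α α := by
  refine ⟨0, fun _ => α, fun i _ => hα, ⟨0, rfl⟩, fun i hi => absurd hi (Nat.not_lt_zero i),
    ⟨0, Or.inl ?_⟩⟩
  simp [chainSums_zero]

lemma connected_twist {α β : Module.Dual K A.H} (h : A.Connected α β) :
    A.Connected α (A.twist β) := by
  obtain ⟨k, f, hf, ⟨n, hf0⟩, hsums, ⟨m, hend⟩⟩ := h
  refine ⟨k, fun i => A.twist (f i), fun i hi => A.twist_mem_roots (hf i hi),
    ⟨n + 1, ?_⟩, fun i hi => ?_, ⟨m, ?_⟩⟩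
  · show A.twist (f 0) = A.twist^[n+1] α
    rw [hf0, ← Function.iterate_succ_apply' A.twist n α]
  · have h1 : A.chainSums (fun j => A.twist (f j)) i = A.twist (A.chainSums f i) := by
      simpa using A.chainSums_twist_iter 1 f i
    rw [h1]; exact A.twist_mem_roots (hsums i hi)
  · have h1 : A.chainSums (fun j => A.twist (f j)) k = A.twist (A.chainSums f k) := by
      simpa using A.chainSums_twist_iter 1 f k
    rw [h1]
    rcases hend with h2 | h2
    · exact Or.inl (by rw [h2, twist_twist_iter])
    · exact Or.inr (by rw [h2, twist_neg, twist_twist_iter])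

lemma connected_untwist {α β : Module.Dual K A.H} (h : A.Connected α β) :
    A.Connected α (A.untwist β) := by
  obtain ⟨k, f, hf, hn, hsums, ⟨m, hend⟩⟩ := h
  refine ⟨k, f, hf, hn, hsums, ⟨m + 1, ?_⟩⟩
  have : A.twist^[m+1] (A.untwist β) = A.twist^[m] β := by
    rw [Function.iterate_succ_apply, twist_untwist]
  rw [this]; exact hend

lemma connected_of_twist {α β : Module.Dual K A.H} (h : A.Connected α (A.twist β)) :
    A.Connected α β := by
  have := A.connected_untwist h
  rwa [untwist_twist] at this

lemma connected_neg {α β : Module.Dual K A.H} (h : A.Connected α β) :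
    A.Connected α (-β) := by
  obtain ⟨k, f, hf, hn, hsums, ⟨m, hend⟩⟩ := h
  refine ⟨k, f, hf, hn, hsums, ⟨m, ?_⟩⟩
  rcases hend with h2 | h2
  · exact Or.inr (by rw [h2, twist_iter_neg, neg_neg])
  · exact Or.inl (by rw [h2, twist_iter_neg])

lemma connected_add (hsym : A.SymmetricRoots) {α β γ : Module.Dual K A.H}
    (hγ : γ ∈ A.roots) (hcon : A.Connected α β)
    (hsum : A.twist β + A.twist γ ∈ A.roots) (hβ : β ∈ A.roots) :
    A.Connected α (A.twist β + A.twist γ) := by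
  obtain ⟨k, f, hf, ⟨n, hf0⟩, hsums, ⟨m, hend⟩⟩ := hcon
  rcases hend with hend | hend
  · refine ⟨k + 1, fun i => if i ≤ k then f i else A.twist^[m] γ,
      fun i hi => ?_, ⟨n, ?_⟩, fun i hi => ?_, ⟨m, Or.inl ?_⟩⟩
    · by_cases h : i ≤ k
      · simpa [h] using hf i h
      · simpa [h] using A.twist_iter_mem_roots hγ m
    · simpa [Nat.zero_le k] using hf0
    · have hik : i ≤ k := Nat.lt_succ_iff.mp hi
      have := A.chainSums_congr (f := f)
        (g := fun j => if j ≤ k then f j else A.twist^[m] γ) (k := k)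
        (fun j hj => by simp [hj]) i hik
      rw [← this]
      rcases Nat.lt_or_ge i k with h | h
      · exact hsums i h
      · have : i = k := le_antisymm hik h
        subst this
        rw [hend]
        exact A.twist_iter_mem_roots hβ m
    · have hck : A.chainSums (fun j => if j ≤ k then f j else A.twist^[m] γ) k
          = A.chainSums f k :=
        (A.chainSums_congr (fun j hj => by simp [hj]) k le_rfl).symm
      rw [chainSums_succ, hck, hend]
      have h1 : (if k + 1 ≤ k then f (k+1) else A.twist^[m] γ) = A.twist^[m] γ := by
        simp
      rw [h1, ← twist_iter_add, twist_twist_iter, twist_add]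
  · refine ⟨k + 1, fun i => if i ≤ k then f i else -(A.twist^[m] γ),
      fun i hi => ?_, ⟨n, ?_⟩, fun i hi => ?_, ⟨m, Or.inr ?_⟩⟩
    · by_cases h : i ≤ k
      · simpa [h] using hf i h
      · simpa [h] using hsym _ (A.twist_iter_mem_roots hγ m)
    · simpa [Nat.zero_le k] using hf0
    · have hik : i ≤ k := Nat.lt_succ_iff.mp hi
      have := A.chainSums_congr (f := f)
        (g := fun j => if j ≤ k then f j else -(A.twist^[m] γ)) (k := k)
        (fun j hj => by simp [hj]) i hik
      rw [← this]
      rcases Nat.lt_or_ge i k with h | h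
      · exact hsums i h
      · have : i = k := le_antisymm hik h
        subst this
        rw [hend]
        exact hsym _ (A.twist_iter_mem_roots hβ m)
    · have hck : A.chainSums (fun j => if j ≤ k then f j else -(A.twist^[m] γ)) k
          = A.chainSums f k :=
        (A.chainSums_congr (fun j hj => by simp [hj]) k le_rfl).symm
      rw [chainSums_succ, hck, hend]
      have h1 : (if k + 1 ≤ k then f (k+1) else -(A.twist^[m] γ)) = -(A.twist^[m] γ) := by
        simp
      rw [h1, ← neg_add, ← twist_iter_add, twist_neg, twist_twist_iter, twist_add]

lemma sign_smul_mem_roots (hsym : A.SymmetricRoots) {c : K} (hc : c = 1 ∨ c = -1)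
    {x : Module.Dual K A.H} (hx : x ∈ A.roots) : c • x ∈ A.roots := by
  have hneg : (-1 : K) • x = -x := by ext h; simp
  rcases hc with rfl | rfl
  · simpa using hx
  · rw [hneg]; exact hsym x hx

lemma or_iff_sign {x y : Module.Dual K A.H} :
    (x = y ∨ x = -y) ↔ ∃ c : K, (c = 1 ∨ c = -1) ∧ x = c • y := by
  constructor
  · rintro (rfl | rfl)
    · exact ⟨1, Or.inl rfl, by ext h; simp⟩
    · exact ⟨-1, Or.inr rfl, by ext h; simp⟩
  · rintro ⟨c, (rfl | rfl), rfl⟩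
    · exact Or.inl (one_smul K _)
    · exact Or.inr (by ext h; simp)

lemma connected_symm (hsym : A.SymmetricRoots) {α β : Module.Dual K A.H}
    (hβ : β ∈ A.roots) (h : A.Connected α β) : A.Connected β α := by
  obtain ⟨k, f, hf, ⟨n, hf0⟩, hsums, ⟨m, hend⟩⟩ := h
  rw [or_iff_sign] at hend
  obtain ⟨c, hc, hend⟩ := hend
  have hc2 : c * c = 1 := by rcases hc with rfl | rfl <;> ring
  set g : ℕ → Module.Dual K A.H := fun j =>
    match j with
    | 0 => A.twist^[m] β
    | (j' + 1) => -(c • A.twist^[2*j'+1] (f (k - j'))) with hg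
  have key : ∀ j ≤ k, A.chainSums g j = c • A.twist^[2*j] (A.chainSums f (k - j)) := by
    intro j hj
    induction j with
    | zero =>
      rw [chainSums_zero]
      show A.twist^[m] β = c • A.twist^[2*0] (A.chainSums f (k - 0))
      rw [Nat.sub_zero, hend]
      simp [smul_smul, hc2]
    | succ j ih =>
      have hjk : j ≤ k := le_trans (Nat.le_succ j) hj
      have ihj := ih hjk
      have hkj : k - j = (k - (j+1)) + 1 := by omega
      set a := A.chainSums f (k - (j+1)) with ha
      set b := f ((k - (j+1)) + 1) with hb0
      have hb : f (k - j) = b := by rw [hkj]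
      have hS : A.chainSums f (k - j) = A.twist (a + b) := by rw [hkj]; rfl
      have hgj : g (j+1) = -(c • A.twist^[2*j+1] (f (k - j))) := rfl
      rw [hb] at hgj
      rw [chainSums_succ, ihj, hgj, hS]
      have e1 : A.twist^[2*j] (A.twist (a + b)) = A.twist^[2*j+1] a + A.twist^[2*j+1] b := by
        rw [← Function.iterate_succ_apply A.twist (2*j) (a+b), twist_iter_add]
      rw [e1]
      have e2 : c • (A.twist^[2*j+1] a + A.twist^[2*j+1] b) + -(c • A.twist^[2*j+1] b)
          = c • A.twist^[2*j+1] a := by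
        rw [smul_add]; abel
      rw [e2, twist_smul]
      have e3 : A.twist (A.twist^[2*j+1] a) = A.twist^[2*(j+1)] a := by
        rw [← Function.iterate_succ_apply' A.twist (2*j+1) a]
        congr 1
      rw [e3]
  refine ⟨k, g, ?_, ⟨m, rfl⟩, ?_, ⟨2*k + n, ?_⟩⟩
  · intro i hi
    match i with
    | 0 => exact A.twist_iter_mem_roots hβ m
    | (j + 1) =>
      have : f (k - j) ∈ A.roots := hf (k - j) (Nat.sub_le k j)
      have h2 : c • A.twist^[2*j+1] (f (k - j)) ∈ A.roots :=
        A.sign_smul_mem_roots hsym hc (A.twist_iter_mem_roots this (2*j+1))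
      exact hsym _ h2
  · intro j hj
    rw [key j (le_of_lt hj)]
    have : A.chainSums f (k - j) ∈ A.roots := by
      rcases Nat.eq_zero_or_pos j with rfl | hjpos
      · rw [Nat.sub_zero, hend]
        exact A.sign_smul_mem_roots hsym hc (A.twist_iter_mem_roots hβ m)
      · exact hsums (k - j) (by omega)
    exact A.sign_smul_mem_roots hsym hc (A.twist_iter_mem_roots this (2*j))
  · rw [key k le_rfl, Nat.sub_self, chainSums_zero, hf0]
    rw [← Function.iterate_add_apply A.twist (2*k) n α]
    rw [or_iff_sign]
    exact ⟨c, hc, rfl⟩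

lemma connected_trans (hsym : A.SymmetricRoots) {α β γ : Module.Dual K A.H}
    (hβ : β ∈ A.roots) (h1 : A.Connected α β) (h2 : A.Connected β γ) :
    A.Connected α γ := by
  obtain ⟨k1, f, hf, ⟨n1, hf0⟩, hs1, ⟨m1, he1⟩⟩ := h1
  obtain ⟨k2, g, hg, ⟨n2, hg0⟩, hs2, ⟨m2, he2⟩⟩ := h2
  rw [or_iff_sign] at he1 he2
  obtain ⟨c1, hc1, he1⟩ := he1
  obtain ⟨c2, hc2, he2⟩ := he2
  set h : ℕ → Module.Dual K A.H := fun i =>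
    if i ≤ k1 then A.twist^[n2] (f i) else c1 • A.twist^[m1] (g (i - k1)) with hh
  have agree : ∀ i ≤ k1, A.chainSums h i = A.twist^[n2] (A.chainSums f i) := by
    intro i hi
    have := A.chainSums_congr (f := fun j => A.twist^[n2] (f j)) (g := h) (k := k1)
      (fun j hj => by simp [hh, hj]) i hi
    rw [← this, chainSums_twist_iter]
  have key : ∀ j ≤ k2, A.chainSums h (k1 + j) = c1 • A.twist^[m1] (A.chainSums g j) := by
    intro j hj
    induction j with
    | zero =>
      rw [Nat.add_zero, agree k1 le_rfl, he1, chainSums_zero, hg0, twist_iter_smul]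
      rw [← Function.iterate_add_apply A.twist n2 m1 β,
        ← Function.iterate_add_apply A.twist m1 n2 β, Nat.add_comm n2 m1]
    | succ j ih =>
      have hjk : j ≤ k2 := le_trans (Nat.le_succ j) hj
      have ihj := ih hjk
      have hstep : A.chainSums h (k1 + (j+1)) = A.twist (A.chainSums h (k1 + j) + h (k1 + j + 1)) := by
        show A.chainSums h ((k1 + j) + 1) = _
        rw [chainSums_succ]
      rw [hstep, ihj]
      have hidx : h (k1 + j + 1) = c1 • A.twist^[m1] (g (j + 1)) := by
        have h1 : ¬ (k1 + j + 1 ≤ k1) := by omega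
        have h2 : k1 + j + 1 - k1 = j + 1 := by omega
        simp [hh, h1, h2]
      rw [hidx, chainSums_succ, ← smul_add, ← twist_iter_add, twist_smul, twist_twist_iter]
  refine ⟨k1 + k2, h, ?_, ⟨n2 + n1, ?_⟩, ?_, ⟨m1 + m2, ?_⟩⟩
  · intro i hi
    by_cases hik : i ≤ k1
    · simp only [hh, if_pos hik]
      exact A.twist_iter_mem_roots (hf i hik) n2
    · simp only [hh, if_neg hik]
      have : g (i - k1) ∈ A.roots := hg (i - k1) (by omega)
      exact A.sign_smul_mem_roots hsym hc1 (A.twist_iter_mem_roots this m1)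
  · show (if 0 ≤ k1 then A.twist^[n2] (f 0) else _) = A.twist^[n2 + n1] α
    rw [if_pos (Nat.zero_le k1), hf0, ← Function.iterate_add_apply]
  · intro i hi
    by_cases hik : i < k1
    · rw [agree i (le_of_lt hik)]
      exact A.twist_iter_mem_roots (hs1 i hik) n2
    · have hj : i = k1 + (i - k1) := by omega
      have hjk : i - k1 < k2 := by omega
      rw [hj, key (i - k1) (le_of_lt hjk)]
      exact A.sign_smul_mem_roots hsym hc1
        (A.twist_iter_mem_roots (hs2 (i - k1) hjk) m1)
  · rw [key k2 le_rfl, he2, twist_iter_smul, smul_smul,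
      ← Function.iterate_add_apply A.twist m1 m2 γ, or_iff_sign]
    refine ⟨c1 * c2, ?_, rfl⟩
    rcases hc1 with rfl | rfl <;> rcases hc2 with rfl | rfl <;> simp

lemma untwist_neg (a : Module.Dual K A.H) : A.untwist (-a) = -A.untwist a := by
  ext h; simp [untwist]

lemma cls_subset_roots {α β : Module.Dual K A.H} (h : β ∈ A.cls α) : β ∈ A.roots := h.1

lemma mem_cls_self {α : Module.Dual K A.H} (hα : α ∈ A.roots) : α ∈ A.cls α :=
  ⟨hα, A.connected_self hα⟩

lemma twist_mem_cls {α β : Module.Dual K A.H} (h : β ∈ A.cls α) : A.twist β ∈ A.cls α :=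
  ⟨A.twist_mem_roots h.1, A.connected_twist h.2⟩

lemma untwist_mem_cls {α β : Module.Dual K A.H} (h : β ∈ A.cls α) : A.untwist β ∈ A.cls α :=
  ⟨A.untwist_mem_roots h.1, A.connected_untwist h.2⟩

lemma neg_mem_cls (hsym : A.SymmetricRoots) {α β : Module.Dual K A.H} (h : β ∈ A.cls α) :
    -β ∈ A.cls α := ⟨hsym _ h.1, A.connected_neg h.2⟩

lemma add_mem_cls (hsym : A.SymmetricRoots) {α β γ : Module.Dual K A.H}
    (hβ : β ∈ A.cls α) (hγ : γ ∈ A.roots) (hsum : A.twist β + A.twist γ ∈ A.roots) :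
    (A.twist β + A.twist γ ∈ A.cls α) ∧ γ ∈ A.cls α := by
  have h1 : A.twist β + A.twist γ ∈ A.cls α :=
    ⟨hsum, A.connected_add hsym hγ hβ.2 hsum hβ.1⟩
  refine ⟨h1, hγ, ?_⟩
  have h2 : A.Connected α (A.twist (A.untwist (A.twist β + A.twist γ)) + A.twist (-β)) :=
    A.connected_add hsym (hsym _ hβ.1) (A.connected_untwist h1.2)
      (by rw [twist_untwist, twist_neg]
          have : A.twist β + A.twist γ + -A.twist β = A.twist γ := by abel
          rw [this]; exact A.twist_mem_roots hγ)
      (A.untwist_mem_roots hsum)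
  rw [twist_untwist, twist_neg] at h2
  have h3 : A.twist β + A.twist γ + -A.twist β = A.twist γ := by abel
  rw [h3] at h2
  exact A.connected_of_twist h2

lemma cls_inter_empty (hsym : A.SymmetricRoots) {α β : Module.Dual K A.H}
    (hβ : β ∈ A.roots) (hnc : ¬ A.Connected α β) :
    ∀ ε, ε ∈ A.cls α → ε ∈ A.cls β → False := by
  intro ε hεα hεβ
  exact hnc (A.connected_trans hsym hεα.1 hεα.2 (A.connected_symm hsym hεβ.1 hεβ.2))

lemma bracketSpan_le_I0 {α β : Module.Dual K A.H} (h : β ∈ A.cls α) :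
    A.bracketSpan β ≤ A.I0 α := le_iSup₂ (f := fun β _ => A.bracketSpan β) β h

lemma rootSpace_le_Vcls {α β : Module.Dual K A.H} (h : β ∈ A.cls α) :
    A.rootSpace β ≤ A.Vcls α := le_iSup₂ (f := fun β _ => A.rootSpace β) β h

lemma I0_le_Icls (α : Module.Dual K A.H) : A.I0 α ≤ A.Icls α := le_sup_left

lemma Vcls_le_Icls (α : Module.Dual K A.H) : A.Vcls α ≤ A.Icls α := le_sup_right

lemma mem_bracketSpan {β : Module.Dual K A.H} {x y : L}
    (hx : x ∈ A.rootSpace β) (hy : y ∈ A.rootSpace (-β)) :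
    A.bracket x y ∈ A.bracketSpan β :=
  Submodule.subset_span (Set.mem_image2_of_mem hx hy)

/-- Key membership lemma: a bracket of a root vector in the class with any root vector
lies in the ideal. -/
lemma bracket_mem_Icls (hsym : A.SymmetricRoots) {α δ ε : Module.Dual K A.H}
    (hδ : δ ∈ A.cls α) {x y : L} (hx : x ∈ A.rootSpace δ) (hy : y ∈ A.rootSpace ε) :
    A.bracket x y ∈ A.Icls α ∧ A.bracket y x ∈ A.Icls α := by
  have hxy : A.bracket x y ∈ A.rootSpace (A.twist (δ + ε)) := A.bracket_mem_rootSpace hx hy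
  have hyx : A.bracket y x ∈ A.rootSpace (A.twist (δ + ε)) := by
    have := A.bracket_mem_rootSpace hy hx
    rwa [add_comm ε δ] at this
  by_cases h0 : δ + ε = 0
  · have hε : ε = -δ := by
      have := congrArg (fun z => z - δ) h0
      simpa [sub_eq_add_neg, add_comm] using eq_neg_of_add_eq_zero_right h0
    subst hε
    constructor
    · exact A.I0_le_Icls α (A.bracketSpan_le_I0 hδ (A.mem_bracketSpan hx hy))
    · refine A.I0_le_Icls α (A.bracketSpan_le_I0 (A.neg_mem_cls hsym hδ) ?_)
      exact A.mem_bracketSpan hy (by rwa [neg_neg])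
  · by_cases hε0 : ε = 0
    · subst hε0
      rw [add_zero] at hxy hyx
      have hc : A.twist δ ∈ A.cls α := A.twist_mem_cls hδ
      exact ⟨A.Vcls_le_Icls α (A.rootSpace_le_Vcls hc hxy),
        A.Vcls_le_Icls α (A.rootSpace_le_Vcls hc hyx)⟩
    · by_cases hεr : ε ∈ A.roots
      · by_cases hsr : A.twist δ + A.twist ε ∈ A.roots
        · have hc : A.twist δ + A.twist ε ∈ A.cls α := (A.add_mem_cls hsym hδ hεr hsr).1
          rw [← twist_add] at hc
          exact ⟨A.Vcls_le_Icls α (A.rootSpace_le_Vcls hc hxy),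
            A.Vcls_le_Icls α (A.rootSpace_le_Vcls hc hyx)⟩
        · have hbot : A.rootSpace (A.twist (δ + ε)) = ⊥ := by
            refine A.rootSpace_eq_bot (fun h => h0 ((A.twist_eq_zero_iff _).mp h)) ?_
            rwa [twist_add]
          rw [hbot] at hxy hyx
          rw [Submodule.mem_bot] at hxy hyx
          rw [hxy, hyx]
          exact ⟨zero_mem _, zero_mem _⟩
      · have hbot : A.rootSpace ε = ⊥ := A.rootSpace_eq_bot hε0 hεr
        rw [hbot, Submodule.mem_bot] at hy
        subst hy
        simp only [map_zero, LinearMap.zero_apply]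
        exact ⟨zero_mem _, zero_mem _⟩

lemma φ_symm_bracket (u v : L) :
    A.φ.symm (A.bracket u v) = A.bracket (A.φ.symm u) (A.φ.symm v) := by
  apply A.φ.injective
  rw [LinearEquiv.apply_symm_apply, A.φ_bracket, LinearEquiv.apply_symm_apply,
    LinearEquiv.apply_symm_apply]

lemma leibniz_sub (a b c : L) :
    A.bracket (A.φ a) (A.bracket b c)
      = A.bracket (A.bracket a b) (A.φ c) - A.bracket (A.bracket a c) (A.φ b) := by
  rw [eq_sub_iff_add_eq']
  exact (A.leibniz c a b).symm

lemma bracket_I0gen_mem (hsym : A.SymmetricRoots) {α δ ε : Module.Dual K A.H}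
    (hδ : δ ∈ A.cls α) {x x' y : L}
    (hx : x ∈ A.rootSpace δ) (hx' : x' ∈ A.rootSpace (-δ)) (hy : y ∈ A.rootSpace ε) :
    A.bracket (A.bracket x x') y ∈ A.Icls α ∧ A.bracket y (A.bracket x x') ∈ A.Icls α := by
  have hy' : A.φ.symm y ∈ A.rootSpace (A.untwist ε) := A.phi_symm_mem_rootSpace hy
  have hyy : A.φ (A.φ.symm y) = y := A.φ.apply_symm_apply y
  have hφx : A.φ x ∈ A.rootSpace (A.twist δ) := A.phi_mem_rootSpace hx
  have hφx' : A.φ x' ∈ A.rootSpace (A.twist (-δ)) := A.phi_mem_rootSpace hx'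
  have hcδ : A.twist δ ∈ A.cls α := A.twist_mem_cls hδ
  have hcδ' : A.twist (-δ) ∈ A.cls α := A.twist_mem_cls (A.neg_mem_cls hsym hδ)
  constructor
  · have lz := A.leibniz (A.φ.symm y) x x'
    rw [hyy] at lz
    rw [lz]
    refine add_mem ?_ ?_
    · exact (A.bracket_mem_Icls hsym hcδ' hφx' (A.bracket_mem_rootSpace hx hy')).2
    · exact (A.bracket_mem_Icls hsym hcδ hφx (A.bracket_mem_rootSpace hx' hy')).1
  · have lz := A.leibniz_sub (A.φ.symm y) x x'
    rw [hyy] at lz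
    rw [lz]
    refine sub_mem ?_ ?_
    · exact (A.bracket_mem_Icls hsym hcδ' hφx' (A.bracket_mem_rootSpace hy' hx)).2
    · exact (A.bracket_mem_Icls hsym hcδ hφx (A.bracket_mem_rootSpace hy' hx')).2

lemma inner_zero (hsym : A.SymmetricRoots) {α δ ε : Module.Dual K A.H}
    (hδ : δ ∈ A.cls α) (hεr : ε ∈ A.roots) (hεn : ε ∉ A.cls α)
    {x y : L} (hx : x ∈ A.rootSpace δ) (hy : y ∈ A.rootSpace ε) :
    A.bracket x y = 0 ∧ A.bracket y x = 0 := by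
  have h0 : δ + ε ≠ 0 := by
    intro h
    apply hεn
    have hε : ε = -δ := eq_neg_of_add_eq_zero_right h
    rw [hε]
    exact A.neg_mem_cls hsym hδ
  have hnr : A.twist δ + A.twist ε ∉ A.roots := fun h => hεn (A.add_mem_cls hsym hδ hεr h).2
  have hbot : A.rootSpace (A.twist (δ + ε)) = ⊥ := by
    refine A.rootSpace_eq_bot (fun h => h0 ((A.twist_eq_zero_iff _).mp h)) ?_
    rwa [twist_add]
  constructor
  · have := A.bracket_mem_rootSpace hx hy
    rw [hbot, Submodule.mem_bot] at this
    exact this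
  · have := A.bracket_mem_rootSpace hy hx
    rw [add_comm ε δ, hbot, Submodule.mem_bot] at this
    exact this

lemma I0gen_bracket_eq_zero (hsym : A.SymmetricRoots) {α δ ε : Module.Dual K A.H}
    (hδ : δ ∈ A.cls α) (hεr : ε ∈ A.roots) (hεn : ε ∉ A.cls α)
    {x x' y : L} (hx : x ∈ A.rootSpace δ) (hx' : x' ∈ A.rootSpace (-δ))
    (hy : y ∈ A.rootSpace ε) :
    A.bracket (A.bracket x x') y = 0 ∧ A.bracket y (A.bracket x x') = 0 := by
  have hy' : A.φ.symm y ∈ A.rootSpace (A.untwist ε) := A.phi_symm_mem_rootSpace hy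
  have hyy : A.φ (A.φ.symm y) = y := A.φ.apply_symm_apply y
  have hunr : A.untwist ε ∈ A.roots := A.untwist_mem_roots hεr
  have hunn : A.untwist ε ∉ A.cls α := by
    intro h
    apply hεn
    have := A.twist_mem_cls h
    rwa [twist_untwist] at this
  have h1 := A.inner_zero hsym hδ hunr hunn hx hy'
  have h2 := A.inner_zero hsym (A.neg_mem_cls hsym hδ) hunr hunn hx' hy'
  constructor
  · have lz := A.leibniz (A.φ.symm y) x x'
    rw [hyy, h1.1, h2.1] at lz
    rw [lz]
    simp
  · have lz := A.leibniz_sub (A.φ.symm y) x x'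
    rw [hyy, h1.2, h2.2] at lz
    rw [lz]
    simp

lemma forall_bracket (hsplit1 : A.H ⊔ ⨆ γ ∈ A.roots, A.rootSpace γ = ⊤)
    {I : Submodule K L} {x : L}
    (hx : ∀ (ε : Module.Dual K A.H), ∀ y ∈ A.rootSpace ε,
      A.bracket x y ∈ I ∧ A.bracket y x ∈ I) :
    ∀ y : L, A.bracket x y ∈ I ∧ A.bracket y x ∈ I := by
  intro y
  have hy : y ∈ (⊤ : Submodule K L) := Submodule.mem_top
  rw [← hsplit1] at hy
  have hP : A.H ⊔ ⨆ γ ∈ A.roots, A.rootSpace γ ≤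
      Submodule.comap (A.bracket x) I ⊓ Submodule.comap (A.bracket.flip x) I := by
    refine sup_le ?_ (iSup₂_le fun γ _ => ?_)
    · intro v hv
      exact ⟨(hx 0 v (A.H_le_rootSpace_zero hv)).1, (hx 0 v (A.H_le_rootSpace_zero hv)).2⟩
    · intro v hv
      exact ⟨(hx γ v hv).1, (hx γ v hv).2⟩
  exact ⟨(hP hy).1, (hP hy).2⟩

lemma isIdeal_Icls (hsym : A.SymmetricRoots)
    (hsplit1 : A.H ⊔ ⨆ γ ∈ A.roots, A.rootSpace γ = ⊤) (α : Module.Dual K A.H) :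
    A.IsIdeal (A.Icls α) := by
  constructor
  · -- bracket closure
    have hQ : A.Icls α ≤ ⨅ (y : L),
        (Submodule.comap (A.bracket.flip y) (A.Icls α) ⊓
          Submodule.comap (A.bracket y) (A.Icls α)) := by
      refine sup_le (iSup₂_le fun β hβ => Submodule.span_le.2 ?_)
        (iSup₂_le fun β hβ => ?_)
      · rintro z ⟨u, hu, u', hu', rfl⟩
        have hall := A.forall_bracket hsplit1
          (x := A.bracket u u') (fun ε y hy => A.bracket_I0gen_mem hsym hβ hu hu' hy)
        exact (Submodule.mem_iInf _).2 fun y => Submodule.mem_inf.2 ⟨(hall y).1, (hall y).2⟩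
      · intro v hv
        have hall := A.forall_bracket hsplit1
          (x := v) (fun ε y hy => A.bracket_mem_Icls hsym hβ hv hy)
        exact (Submodule.mem_iInf _).2 fun y => Submodule.mem_inf.2 ⟨(hall y).1, (hall y).2⟩
    intro x hx y
    have := Submodule.mem_inf.1 ((Submodule.mem_iInf _).1 (hQ hx) y)
    exact ⟨this.1, this.2⟩
  · -- φ-invariance
    apply le_antisymm
    · rw [Submodule.map_le_iff_le_comap]
      refine sup_le (iSup₂_le fun β hβ => Submodule.span_le.2 ?_)
        (iSup₂_le fun β hβ => ?_)
      · rintro z ⟨u, hu, u', hu', rfl⟩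
        show A.φ (A.bracket u u') ∈ A.Icls α
        rw [A.φ_bracket]
        have hu2 : A.φ u' ∈ A.rootSpace (-(A.twist β)) := by
          have := A.phi_mem_rootSpace hu'
          rwa [twist_neg] at this
        exact A.I0_le_Icls α (A.bracketSpan_le_I0 (A.twist_mem_cls hβ)
          (A.mem_bracketSpan (A.phi_mem_rootSpace hu) hu2))
      · intro v hv
        show A.φ v ∈ A.Icls α
        exact A.Vcls_le_Icls α
          (A.rootSpace_le_Vcls (A.twist_mem_cls hβ) (A.phi_mem_rootSpace hv))
    · refine sup_le (iSup₂_le fun β hβ => Submodule.span_le.2 ?_)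
        (iSup₂_le fun β hβ => ?_)
      · rintro z ⟨u, hu, u', hu', rfl⟩
        refine Submodule.mem_map.2 ⟨A.bracket (A.φ.symm u) (A.φ.symm u'), ?_, ?_⟩
        · have hu2 : A.φ.symm u' ∈ A.rootSpace (-(A.untwist β)) := by
            have := A.phi_symm_mem_rootSpace hu'
            rwa [untwist_neg] at this
          exact A.I0_le_Icls α (A.bracketSpan_le_I0 (A.untwist_mem_cls hβ)
            (A.mem_bracketSpan (A.phi_symm_mem_rootSpace hu) hu2))
        · show A.φ _ = _
          rw [← A.φ_symm_bracket, LinearEquiv.apply_symm_apply]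
      · intro v hv
        refine Submodule.mem_map.2 ⟨A.φ.symm v, ?_, ?_⟩
        · exact A.Vcls_le_Icls α
            (A.rootSpace_le_Vcls (A.untwist_mem_cls hβ) (A.phi_symm_mem_rootSpace hv))
        · show A.φ _ = _
          rw [LinearEquiv.apply_symm_apply]

lemma Icls_orthogonal (hsym : A.SymmetricRoots) {α β : Module.Dual K A.H}
    (disj : ∀ ε, ε ∈ A.cls α → ε ∈ A.cls β → False) :
    ∀ x ∈ A.Icls α, ∀ y ∈ A.Icls β, A.bracket x y = 0 := by
  have step1 : ∀ (x₀ : L),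
      (∀ ε, ε ∈ A.cls β →
        (∀ y ∈ A.rootSpace ε, A.bracket x₀ y = 0) ∧
        (∀ w ∈ A.rootSpace ε, ∀ w' ∈ A.rootSpace (-ε), A.bracket x₀ (A.bracket w w') = 0)) →
      ∀ y ∈ A.Icls β, A.bracket x₀ y = 0 := by
    intro x₀ hgen y hy
    have hker : A.Icls β ≤ LinearMap.ker (A.bracket x₀) := by
      refine sup_le (iSup₂_le fun ε hε => Submodule.span_le.2 ?_) (iSup₂_le fun ε hε => ?_)
      · rintro z ⟨w, hw, w', hw', rfl⟩
        exact LinearMap.mem_ker.2 ((hgen ε hε).2 w hw w' hw')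
      · intro v hv
        exact LinearMap.mem_ker.2 ((hgen ε hε).1 v hv)
    exact LinearMap.mem_ker.1 (hker hy)
  have main : A.Icls α ≤
      ⨅ (p : {y // y ∈ A.Icls β}), LinearMap.ker (A.bracket.flip p.1) := by
    refine sup_le (iSup₂_le fun δ hδ => Submodule.span_le.2 ?_) (iSup₂_le fun δ hδ => ?_)
    · rintro z ⟨u, hu, u', hu', rfl⟩
      refine (Submodule.mem_iInf _).2 fun p => LinearMap.mem_ker.2 (step1 _ ?_ p.1 p.2)
      intro ε hε
      have hεn : ε ∉ A.cls α := fun h => disj ε h hε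
      constructor
      · intro y hy
        exact (A.I0gen_bracket_eq_zero hsym hδ hε.1 hεn hu hu' hy).1
      · intro w hw w' hw'
        have hu2 : A.φ.symm u ∈ A.rootSpace (A.untwist δ) := A.phi_symm_mem_rootSpace hu
        have hu2' : A.φ.symm u' ∈ A.rootSpace (-(A.untwist δ)) := by
          have := A.phi_symm_mem_rootSpace hu'
          rwa [untwist_neg] at this
        have hεn' : -ε ∉ A.cls α := fun h => disj _ h (A.neg_mem_cls hsym hε)
        have hδ2 : A.untwist δ ∈ A.cls α := A.untwist_mem_cls hδ
        have e1 : A.bracket (A.bracket (A.φ.symm u) (A.φ.symm u')) w = 0 :=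
          (A.I0gen_bracket_eq_zero hsym hδ2 hε.1 hεn hu2 hu2' hw).1
        have e2 : A.bracket (A.bracket (A.φ.symm u) (A.φ.symm u')) w' = 0 :=
          (A.I0gen_bracket_eq_zero hsym hδ2 (hsym ε hε.1) hεn' hu2 hu2' hw').1
        have lz := A.leibniz_sub (A.bracket (A.φ.symm u) (A.φ.symm u')) w w'
        rw [e1, e2, ← A.φ_symm_bracket, LinearEquiv.apply_symm_apply] at lz
        rw [lz]
        simp
    · intro v hv
      refine (Submodule.mem_iInf _).2 fun p => LinearMap.mem_ker.2 (step1 _ ?_ p.1 p.2)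
      intro ε hε
      have hεn : ε ∉ A.cls α := fun h => disj ε h hε
      constructor
      · intro y hy
        exact (A.inner_zero hsym hδ hε.1 hεn hv hy).1
      · intro w hw w' hw'
        have hδr : δ ∈ A.roots := hδ.1
        have hδn : δ ∉ A.cls β := fun h => disj δ hδ h
        exact (A.I0gen_bracket_eq_zero hsym hε hδr hδn hw hw' hv).2
  intro x hx y hy
  exact LinearMap.mem_ker.1 ((Submodule.mem_iInf _).1 (main hx) ⟨y, hy⟩)

end Aux

end SplitRegularHomLeibniz


open SplitRegularHomLeibniz in
theorem decomposition_theorem {K L : Type*} [Field K] [AddCommGroup L] [Module K L]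
    (A : SplitRegularHomLeibniz K L)
    (hsplit : A.IsSplit) (hmax : A.MaximalAbelian)
    (hsym : A.SymmetricRoots) (U : Submodule K L) (hUH : U ≤ A.H)
    (hU1 : U ⊓ (⨆ α ∈ A.roots, A.bracketSpan α) = ⊥)
    (hU2 : U ⊔ (⨆ α ∈ A.roots, A.bracketSpan α) = A.H) :
    (U ⊔ ⨆ α ∈ A.roots, A.Icls α) = ⊤ ∧
    (∀ α ∈ A.roots, A.IsIdeal (A.Icls α)) ∧
    (∀ α ∈ A.roots, ∀ β ∈ A.roots, ¬ A.Connected α β →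
      ∀ x ∈ A.Icls α, ∀ y ∈ A.Icls β, A.bracket x y = 0) := by
  refine ⟨?_, ?_, ?_⟩
  · refine le_antisymm le_top ?_
    rw [← hsplit.1]
    refine sup_le ?_ (iSup₂_le fun γ hγ => ?_)
    · have hle : U ⊔ (⨆ α ∈ A.roots, A.bracketSpan α) ≤ U ⊔ ⨆ α ∈ A.roots, A.Icls α := by
        refine sup_le le_sup_left (le_trans (iSup₂_le fun γ hγ => ?_) le_sup_right)
        exact le_trans (le_trans (A.bracketSpan_le_I0 (A.mem_cls_self hγ)) (A.I0_le_Icls γ))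
          (le_iSup₂ (f := fun γ _ => A.Icls γ) γ hγ)
      rw [hU2] at hle
      exact hle
    · refine le_trans ?_ le_sup_right
      exact le_trans (le_trans (A.rootSpace_le_Vcls (A.mem_cls_self hγ)) (A.Vcls_le_Icls γ))
        (le_iSup₂ (f := fun γ _ => A.Icls γ) γ hγ)
  · intro α _
    exact A.isIdeal_Icls hsym hsplit.1 α
  · intro α hα β hβ hnc x hx y hy
    exact A.Icls_orthogonal hsym (A.cls_inter_empty hsym hβ hnc) x hx y hy
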